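/- For binary trees T and T' of size n, T ≤ T' in the Tamari lattice if and only if the dual bracket-vector of T is componentwise at least the dual bracket-vector of T', where the i-th entry of the dual bracket-vector is the size of the left subtree of the i-th node in infix order. -/
import Mathlib


/-- Binary trees: a leaf or a binary node with two subtrees. -/
inductive BT : Type
  | leaf : BT
  | node : BT → BT → BT

namespace BT

/-- Number of binary (internal) nodes. -/
def size : BT → ℕ
  | leaf => 0
  | node l r => l.size + r.size + 1

/-- One right rotation somewhere in the tree: ((A,B),C) ↦ (A,(B,C)). -/
inductive Rot : BT → BT → Prop
  | rotate (A B C : BT) : Rot (node (node A B) C) (node A (node B C))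
  | left {l l' : BT} (r : BT) : Rot l l' → Rot (node l r) (node l' r)
  | right (l : BT) {r r' : BT} : Rot r r' → Rot (node l r) (node l r')

/-- Tamari order: reflexive-transitive closure of right rotation. -/
def tle (T T' : BT) : Prop := Relation.ReflTransGen Rot T T'

/-- Bracket-vector: sizes of right subtrees of nodes, in infix order. -/
def bracket : BT → List ℕ
  | leaf => []
  | node l r => bracket l ++ r.size :: bracket r

/-- Dual bracket-vector: sizes of left subtrees of nodes, in infix order. -/
def dualBracket : BT → List ℕ
  | leaf => []
  | node l r => dualBracket l ++ l.size :: dualBracket r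

/-- Canopy word: for each leaf (left to right), 1 if it is a left child, 0 if a right child;
the argument `b` is the value assigned to the tree if it is itself a leaf. -/
def canopyAux (b : ℕ) : BT → List ℕ
  | leaf => [b]
  | node l r => canopyAux 1 l ++ canopyAux 0 r

/-- Canopy-vector of a binary tree. -/
def canopy (T : BT) : List ℕ := canopyAux 1 T

/-- Left-right mirror. -/
def mir : BT → BT
  | leaf => leaf
  | node l r => node (mir r) (mir l)

/-- Tamari interval of size n. -/
def interval (p : BT × BT) (n : ℕ) : Prop :=
  p.1.size = n ∧ p.2.size = n ∧ tle p.1 p.2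

/-- Tamari interval (of unspecified size). -/
def isInt (p : BT × BT) : Prop := p.1.size = p.2.size ∧ tle p.1 p.2

/-- The rise operation (T,T') ↦ ((T,ε),(ε,T')). -/
def riseF (p : BT × BT) : BT × BT := (node p.1 leaf, node leaf p.2)

/-- An interval is modern when its rise is again an interval. -/
def modern (p : BT × BT) : Prop := tle (node p.1 leaf) (node leaf p.2)

/-- Infinitely modern: every iterated rise is an interval. -/
def infModern (p : BT × BT) : Prop :=
  ∀ k : ℕ, tle ((riseF^[k] p).1) ((riseF^[k] p).2)

/-- Synchronized: equal canopies. -/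
def synced (p : BT × BT) : Prop := canopy p.1 = canopy p.2

/-- Self-dual: equal to its dual (mir T', mir T). -/
def selfDual (p : BT × BT) : Prop := mir p.2 = p.1 ∧ mir p.1 = p.2

/-- Number of positions where the two canopies agree. -/
def agreeCount (p : BT × BT) : ℕ :=
  ((List.range (p.1.size + 1)).filter
    (fun i => (canopy p.1).getD i 0 == (canopy p.2).getD i 0)).length

/-- Number of canopy positions of joint type (a on top, b on bottom), for an interval (T,T')
with T' the upper tree. -/
def typeCount (a b : ℕ) (p : BT × BT) : ℕ :=
  ((List.range (p.1.size + 1)).filter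
    (fun i => ((canopy p.2).getD i 0 == a) && ((canopy p.1).getD i 0 == b))).length

end BT

namespace BT

lemma length_dualBracket (T : BT) : (dualBracket T).length = T.size := by
  induction T with
  | leaf => rfl
  | node l r ihl ihr => simp [dualBracket, size, ihl, ihr]; omega

lemma dualBracket_le (T : BT) (i : ℕ) : (dualBracket T).getD i 0 ≤ i := by
  induction T generalizing i with
  | leaf => simp [dualBracket]
  | node l r ihl ihr =>
    rw [dualBracket]
    rcases Nat.lt_or_ge i l.size with h | h
    · rw [List.getD_append _ _ _ _ (by rw [length_dualBracket]; exact h)]; exact ihl i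
    · rw [List.getD_append_right _ _ _ _ (by rw [length_dualBracket]; omega), length_dualBracket]
      rcases Nat.eq_or_lt_of_le h with h' | h'
      · subst h'; simp
      · have hk : i - l.size = (i - l.size - 1) + 1 := by omega
        rw [hk, List.getD_cons_succ]
        exact le_trans (ihr _) (by omega)

lemma Rot.size_eq {T T' : BT} (h : Rot T T') : T.size = T'.size := by
  induction h with
  | rotate A B C => simp [size]; omega
  | left r h ih => simp [size, ih]
  | right l h ih => simp [size, ih]

lemma getD_le_of_parts (xs xs' ys ys' : List ℕ) (u u' : ℕ) (hlen : xs'.length = xs.length)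
    (hx : ∀ i, xs'.getD i 0 ≤ xs.getD i 0) (hy : ∀ i, ys'.getD i 0 ≤ ys.getD i 0)
    (hu : u' ≤ u) : ∀ i, (xs' ++ u' :: ys').getD i 0 ≤ (xs ++ u :: ys).getD i 0 := by
  intro i
  rcases Nat.lt_or_ge i xs.length with h | h
  · rw [List.getD_append _ _ _ _ (hlen ▸ h), List.getD_append _ _ _ _ h]; exact hx i
  · rw [List.getD_append_right _ _ _ _ (by omega), List.getD_append_right _ _ _ _ (by omega),
      hlen]
    rcases Nat.eq_or_lt_of_le h with h' | h'
    · rw [← h']; simpa using hu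
    · have hk : i - xs.length = (i - xs.length - 1) + 1 := by omega
      rw [hk, List.getD_cons_succ, List.getD_cons_succ]; exact hy _

lemma Rot.dual_le {T T' : BT} (h : Rot T T') :
    ∀ i, (dualBracket T').getD i 0 ≤ (dualBracket T).getD i 0 := by
  induction h with
  | rotate A B C =>
    have key := getD_le_of_parts (dualBracket A ++ A.size :: dualBracket B)
      (dualBracket A ++ A.size :: dualBracket B) (dualBracket C) (dualBracket C)
      (A.size + B.size + 1) B.size rfl (fun i => le_refl _) (fun i => le_refl _) (by omega)
    intro i
    have e1 : dualBracket (node A (node B C)) =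
        (dualBracket A ++ A.size :: dualBracket B) ++ B.size :: dualBracket C := by
      simp [dualBracket]
    have e2 : dualBracket (node (node A B) C) =
        (dualBracket A ++ A.size :: dualBracket B) ++ (A.size + B.size + 1) :: dualBracket C := by
      simp [dualBracket, size]
    rw [e1, e2]; exact key i
  | @left l l' r h ih =>
    intro i
    rw [show dualBracket (node l' r) = dualBracket l' ++ l'.size :: dualBracket r from rfl,
      show dualBracket (node l r) = dualBracket l ++ l.size :: dualBracket r from rfl]
    exact getD_le_of_parts _ _ _ _ _ _
      (by rw [length_dualBracket, length_dualBracket, h.size_eq]) ih (fun _ => le_refl _)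
      (le_of_eq h.size_eq.symm) i
  | @right l r r' h ih =>
    intro i
    exact getD_le_of_parts _ _ _ _ _ _ rfl (fun _ => le_refl _) ih (le_refl _) i

lemma tle.dual_le {T T' : BT} (h : tle T T') :
    ∀ i, (dualBracket T').getD i 0 ≤ (dualBracket T).getD i 0 := by
  induction h with
  | refl => exact fun _ => le_refl _
  | tail _ h2 ih => exact fun i => le_trans (h2.dual_le i) (ih i)

lemma tle.size_eq {T T' : BT} (h : tle T T') : T.size = T'.size := by
  induction h with
  | refl => rfl
  | tail _ h2 ih => exact ih.trans h2.size_eq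

lemma tle_node_left {l l' : BT} (r : BT) (h : tle l l') : tle (node l r) (node l' r) := by
  induction h with
  | refl => exact .refl
  | tail _ h2 ih => exact ih.tail (.left r h2)

lemma tle_node_right (l : BT) {r r' : BT} (h : tle r r') : tle (node l r) (node l r') := by
  induction h with
  | refl => exact .refl
  | tail _ h2 ih => exact ih.tail (.right l h2)

lemma size_eq_zero {T : BT} (h : T.size = 0) : T = leaf := by
  cases T with
  | leaf => rfl
  | node l r => simp [size] at h

/-- Key rotation lemma: if node at infix position `p` is on the left spine of `T`
(i.e. its dual bracket entry equals `p`), then `T` can be rotated to a tree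
`node U W` with `U.size = p`, changing entries only at former spine positions. -/
lemma exists_rot (T : BT) (p : ℕ) (hp : p < T.size)
    (h : (dualBracket T).getD p 0 = p) :
    ∃ U W : BT, U.size = p ∧ U.size + W.size + 1 = T.size ∧ tle T (node U W) ∧
      ∀ i, (dualBracket (node U W)).getD i 0 = (dualBracket T).getD i 0 ∨
        ((dualBracket T).getD i 0 = i ∧ p < i ∧
          (dualBracket (node U W)).getD i 0 = i - p - 1) := by
  induction T with
  | leaf => simp [size] at hp
  | node L R ihL ihR =>
    clear ihR
    have hdb : dualBracket (node L R) = dualBracket L ++ L.size :: dualBracket R := rfl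
    rcases Nat.lt_trichotomy p L.size with hcase | hcase | hcase
    · -- p inside left subtree
      have hL : (dualBracket L).getD p 0 = p := by
        rw [hdb, List.getD_append _ _ _ _ (by rw [length_dualBracket]; exact hcase)] at h
        exact h
      obtain ⟨U, W', hU, hsz, hle, hd⟩ := ihL hcase hL
      refine ⟨U, node W' R, hU, by simp [size]; omega, ?_, ?_⟩
      · have step1 : tle (node L R) (node (node U W') R) := tle_node_left R hle
        exact step1.tail (Rot.rotate U W' R)
      · intro i
        have e1 : dualBracket (node U (node W' R)) =
            dualBracket (node U W') ++ W'.size :: dualBracket R := by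
          simp [dualBracket]
        have hlen1 : (dualBracket (node U W')).length = L.size := by
          rw [length_dualBracket]; simp [size] at hsz ⊢; omega
        have hlenL : (dualBracket L).length = L.size := length_dualBracket L
        rcases Nat.lt_trichotomy i L.size with hi | hi | hi
        · -- use hd i
          have eL : (dualBracket (node L R)).getD i 0 = (dualBracket L).getD i 0 := by
            rw [hdb, List.getD_append _ _ _ _ (by omega)]
          have eU : (dualBracket (node U (node W' R))).getD i 0 =
              (dualBracket (node U W')).getD i 0 := by
            rw [e1, List.getD_append _ _ _ _ (by omega)]
          rw [eL, eU]
          exact hd i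
        · -- i = L.size : former spine node
          right
          have eL : (dualBracket (node L R)).getD i 0 = L.size := by
            rw [hdb, List.getD_append_right _ _ _ _ (by omega)]
            have : i - (dualBracket L).length = 0 := by omega
            rw [this]; simp
          have eU : (dualBracket (node U (node W' R))).getD i 0 = W'.size := by
            rw [e1, List.getD_append_right _ _ _ _ (by omega)]
            have : i - (dualBracket (node U W')).length = 0 := by omega
            rw [this]; simp
          refine ⟨by rw [eL, hi], by omega, ?_⟩
          rw [eU]; omega
        · -- i > L.size : inside R, unchanged
          left
          have eL : (dualBracket (node L R)).getD i 0 =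
              (dualBracket R).getD (i - L.size - 1) 0 := by
            rw [hdb, List.getD_append_right _ _ _ _ (by omega)]
            have hk : i - (dualBracket L).length = (i - L.size - 1) + 1 := by omega
            rw [hk, List.getD_cons_succ]
          have eU : (dualBracket (node U (node W' R))).getD i 0 =
              (dualBracket R).getD (i - L.size - 1) 0 := by
            rw [e1, List.getD_append_right _ _ _ _ (by omega)]
            have hk : i - (dualBracket (node U W')).length = (i - L.size - 1) + 1 := by omega
            rw [hk, List.getD_cons_succ]
          rw [eL, eU]
    · -- p is the root
      refine ⟨L, R, hcase.symm, rfl, .refl, fun i => Or.inl rfl⟩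
    · -- p inside right subtree: impossible
      exfalso
      have : (dualBracket (node L R)).getD p 0 ≤ p - L.size - 1 := by
        rw [hdb, List.getD_append_right _ _ _ _ (by rw [length_dualBracket]; omega),
          length_dualBracket]
        have hk : p - L.size = (p - L.size - 1) + 1 := by omega
        rw [hk, List.getD_cons_succ]
        exact dualBracket_le R _
      omega

lemma main_hard (T' : BT) : ∀ T : BT, T.size = T'.size →
    (∀ i, (dualBracket T').getD i 0 ≤ (dualBracket T).getD i 0) → tle T T' := by
  induction T' with
  | leaf => intro T hs _; rw [size_eq_zero hs]; exact .refl
  | node L' R' ihL ihR =>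
    intro T hs h
    set p := L'.size with hpdef
    have hdb' : dualBracket (node L' R') = dualBracket L' ++ p :: dualBracket R' := rfl
    have hlenL' : (dualBracket L').length = p := length_dualBracket L'
    have hT'p : (dualBracket (node L' R')).getD p 0 = p := by
      rw [hdb', List.getD_append_right _ _ _ _ (by omega)]
      have : p - (dualBracket L').length = 0 := by omega
      rw [this]; simp
    have hTp : (dualBracket T).getD p 0 = p := by
      have hp' := h p
      rw [hT'p] at hp'
      exact le_antisymm (dualBracket_le T p) hp'
    have hp : p < T.size := by rw [hs]; simp [size]; omega
    obtain ⟨U, W, hU, hsz, hle, hd⟩ := exists_rot T p hp hTp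
    have hlenU : (dualBracket U).length = p := by rw [length_dualBracket, hU]
    have e1 : dualBracket (node U W) = dualBracket U ++ p :: dualBracket W := by
      rw [show dualBracket (node U W) = dualBracket U ++ U.size :: dualBracket W from rfl, hU]
    -- componentwise for left parts
    have hxL : ∀ j, (dualBracket L').getD j 0 ≤ (dualBracket U).getD j 0 := by
      intro j
      rcases Nat.lt_or_ge j p with hj | hj
      · have e2 : (dualBracket (node U W)).getD j 0 = (dualBracket U).getD j 0 := by
          rw [e1, List.getD_append _ _ _ _ (by omega)]
        have e3 : (dualBracket (node L' R')).getD j 0 = (dualBracket L').getD j 0 := by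
          rw [hdb', List.getD_append _ _ _ _ (by omega)]
        rcases hd j with hdj | ⟨_, hj', _⟩
        · rw [← e2, hdj, ← e3] at *; exact h j
        · omega
      · rw [List.getD_eq_default _ _ (by omega)]; exact Nat.zero_le _
    have hxR : ∀ j, (dualBracket R').getD j 0 ≤ (dualBracket W).getD j 0 := by
      intro j
      have e2 : (dualBracket (node U W)).getD (p + 1 + j) 0 = (dualBracket W).getD j 0 := by
        rw [e1, List.getD_append_right _ _ _ _ (by omega)]
        have hk : p + 1 + j - (dualBracket U).length = j + 1 := by omega
        rw [hk, List.getD_cons_succ]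
      have e3 : (dualBracket (node L' R')).getD (p + 1 + j) 0 = (dualBracket R').getD j 0 := by
        rw [hdb', List.getD_append_right _ _ _ _ (by omega)]
        have hk : p + 1 + j - (dualBracket L').length = j + 1 := by omega
        rw [hk, List.getD_cons_succ]
      rcases hd (p + 1 + j) with hdj | ⟨_, _, hv⟩
      · rw [← e2, hdj, ← e3]; exact h _
      · rw [← e2, hv]
        exact le_trans (dualBracket_le R' j) (by omega)
    have hsL : U.size = L'.size := by rw [hU]
    have hsR : W.size = R'.size := by
      have : T.size = L'.size + R'.size + 1 := by rw [hs]; rfl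
      omega
    have t1 : tle U L' := ihL U hsL hxL
    have t2 : tle W R' := ihR W hsR hxR
    exact hle.trans ((tle_node_left W t1).trans (tle_node_right L' t2))

end BT

theorem dual_bracket_vector_characterization (n : ℕ) (T T' : BT)
    (hT : T.size = n) (hT' : T'.size = n) :
    BT.tle T T' ↔ ∀ i < n, (BT.dualBracket T').getD i 0 ≤ (BT.dualBracket T).getD i 0 := by
  constructor
  · intro h i _
    exact h.dual_le i
  · intro h
    apply BT.main_hard
    · rw [hT, hT']
    · intro i
      rcases Nat.lt_or_ge i n with hi | hi
      · exact h i hi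
      · rw [List.getD_eq_default _ _ (by rw [BT.length_dualBracket, hT']; omega)]
        exact Nat.zero_le _
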